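/- Let G be a profinite group, U an open subgroup of index prime to p, and χ₁, χ₂, χ₃ ∈ H¹(G, ℤ/p). Suppose α ∈ ⟨χ₁,χ₂,χ₃⟩ and that Res_U α = Res_U(χ₁) ∪ ψ₁ + Res_U(χ₃) ∪ ψ₃ for some ψ₁, ψ₃ ∈ H¹(U). Then (G:U)·α = χ₁ ∪ Cor_G(ψ₁) + χ₃ ∪ Cor_G(ψ₃), and consequently 0 ∈ ⟨χ₁,χ₂,χ₃⟩. -/

import Mathlib

/-!  Framework: mod-p group cohomology in low degrees via explicit
inhomogeneous cochains, cup products, restriction, corestriction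
(transfer), and triple Massey products. -/

namespace MasseyGalois

variable {p : ℕ}

/-- A (degree-one) character: an additive character `G → ℤ/p`,
i.e. a 1-cocycle; these are exactly the elements of `H¹(G, ℤ/p)`. -/
def IsChar (p : ℕ) {G : Type} [Group G] (χ : G → ZMod p) : Prop :=
  ∀ σ τ : G, χ (σ * τ) = χ σ + χ τ

theorem IsChar.one {G : Type} [Group G] {χ : G → ZMod p} (h : IsChar p χ) :
    χ 1 = 0 := by
  have h1 := h 1 1
  rw [mul_one] at h1
  exact (left_eq_add.mp h1)

theorem IsChar.inv {G : Type} [Group G] {χ : G → ZMod p} (h : IsChar p χ)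
    (σ : G) : χ σ⁻¹ = -χ σ := by
  have h1 := h σ σ⁻¹
  rw [mul_inv_cancel, h.one] at h1
  linear_combination -h1

/-- The kernel of a character, as a subgroup. -/
def charKer {G : Type} [Group G] (χ : G → ZMod p) (h : IsChar p χ) :
    Subgroup G where
  carrier := {σ | χ σ = 0}
  one_mem' := h.one
  mul_mem' := by
    intro a b ha hb
    simp only [Set.mem_setOf_eq] at *
    rw [h a b, ha, hb, add_zero]
  inv_mem' := by
    intro a ha
    simp only [Set.mem_setOf_eq] at *
    rw [h.inv, ha, neg_zero]

theorem mem_charKer_iff {G : Type} [Group G] {χ : G → ZMod p}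
    (h : IsChar p χ) {σ : G} : σ ∈ charKer χ h ↔ χ σ = 0 := Iff.rfl

theorem charKer_normal {G : Type} [Group G] (χ : G → ZMod p)
    (h : IsChar p χ) : (charKer χ h).Normal := by
  constructor
  intro n hn g
  show χ (g * n * g⁻¹) = 0
  rw [h, h, h.inv]
  have hn' : χ n = 0 := hn
  rw [hn']
  ring

theorem charKer_comm_mem {G : Type} [Group G] {χ : G → ZMod p}
    (h : IsChar p χ) (σ τ : G) : σ * τ * σ⁻¹ * τ⁻¹ ∈ charKer χ h := by
  show χ (σ * τ * σ⁻¹ * τ⁻¹) = 0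
  rw [h, h, h, h.inv, h.inv]
  ring

/-- Coboundary of a 1-cochain (inhomogeneous cochains, trivial action). -/
def d1 {G : Type} [Group G] (φ : G → ZMod p) : G → G → ZMod p :=
  fun σ τ => φ σ + φ τ - φ (σ * τ)

/-- Coboundary of a 2-cochain. -/
def d2 {G : Type} [Group G] (f : G → G → ZMod p) : G → G → G → ZMod p :=
  fun σ τ ρ => f τ ρ - f (σ * τ) ρ + f σ (τ * ρ) - f σ τ

/-- Cup product of two 1-cochains. -/
def cup {G : Type} (χ χ' : G → ZMod p) : G → G → ZMod p :=
  fun σ τ => χ σ * χ' τ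

def IsCocycle2 {G : Type} [Group G] (f : G → G → ZMod p) : Prop :=
  ∀ σ τ ρ, d2 f σ τ ρ = 0

def IsCoboundary2 {G : Type} [Group G] (f : G → G → ZMod p) : Prop :=
  ∃ φ : G → ZMod p, f = d1 φ

/-- Two 2-cochains represent the same class in `H²`. -/
def Cohomologous {G : Type} [Group G] (f g : G → G → ZMod p) : Prop :=
  IsCoboundary2 (f - g)

/-- `z` is the value `χ₁ ∪ φ₂₃ + φ₁₂ ∪ χ₃` of a defining system for the
triple Massey product `⟨χ₁, χ₂, χ₃⟩`. -/
def MasseyRep {G : Type} [Group G] (χ₁ χ₂ χ₃ : G → ZMod p)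
    (z : G → G → ZMod p) : Prop :=
  ∃ φ₁₂ φ₂₃ : G → ZMod p,
    d1 φ₁₂ = cup χ₁ χ₂ ∧ d1 φ₂₃ = cup χ₂ χ₃ ∧
    z = cup χ₁ φ₂₃ + cup φ₁₂ χ₃

/-- The set of all 2-cocycles whose class lies in the triple Massey
product `⟨χ₁, χ₂, χ₃⟩ ⊆ H²`; as this set is closed under coboundaries,
equalities/membership statements about it faithfully encode the
corresponding statements about the subset of `H²`. -/
def MasseySet {G : Type} [Group G] (χ₁ χ₂ χ₃ : G → ZMod p) :
    Set (G → G → ZMod p) :=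
  {z | ∃ z', MasseyRep χ₁ χ₂ χ₃ z' ∧ Cohomologous z z'}

/-- The Massey product is essential: non-empty but not containing `0`. -/
def MasseyEssential {G : Type} [Group G] (χ₁ χ₂ χ₃ : G → ZMod p) : Prop :=
  (MasseySet χ₁ χ₂ χ₃).Nonempty ∧
    (0 : G → G → ZMod p) ∉ MasseySet χ₁ χ₂ χ₃

/-- `ℤ/p`-linear independence of a pair of characters. -/
def LinIndepPair {G : Type} (χ χ' : G → ZMod p) : Prop :=
  ∀ a b : ZMod p, (∀ g : G, a * χ g + b * χ' g = 0) → a = 0 ∧ b = 0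

/-- Restriction of a 1-cochain to a subgroup. -/
def res1 {G : Type} [Group G] (U : Subgroup G) (χ : G → ZMod p) :
    ↥U → ZMod p := fun u => χ ↑u

/-- Restriction of a 2-cochain to a subgroup. -/
def res2 {G : Type} [Group G] (U : Subgroup G) (f : G → G → ZMod p) :
    ↥U → ↥U → ZMod p := fun u v => f ↑u ↑v

/-- Corestriction (transfer) on `H¹` from a finite-index subgroup. -/
noncomputable def cor1 {G : Type} [Group G] (K : Subgroup G)
    (φ : ↥K → ZMod p) : G → ZMod p := by
  classical
  exact if h : K.FiniteIndex ∧ IsChar p φ then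
    haveI := h.1
    let φ' : ↥K →* Multiplicative (ZMod p) :=
      { toFun := fun k => Multiplicative.ofAdd (φ k)
        map_one' := by
          show Multiplicative.ofAdd (φ 1) = 1
          rw [h.2.one]; rfl
        map_mul' := fun a b => by
          show Multiplicative.ofAdd (φ (a * b)) = _
          rw [h.2 a b]; rfl }
    fun g => Multiplicative.toAdd (MonoidHom.transfer φ' g)
  else 0

/-- Exactness of `H¹(ker χ) →(Cor) H¹(H) →(χ ∪ ·) H²(H)` at `H¹(H)`. -/
def ExactAtH1 {H : Type} [Group H] (p : ℕ) (χ : H → ZMod p)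
    (hχ : IsChar p χ) : Prop :=
  ∀ lam : H → ZMod p, IsChar p lam →
    (IsCoboundary2 (cup χ lam) ↔
      ∃ μ : ↥(charKer χ hχ) → ZMod p, IsChar p μ ∧
        lam = cor1 (charKer χ hχ) μ)

/-- Exactness of `H¹(H) →(χ ∪ ·) H²(H) →(Res) H²(ker χ)` at `H²(H)`. -/
def ExactAtH2 {H : Type} [Group H] (p : ℕ) (χ : H → ZMod p)
    (hχ : IsChar p χ) : Prop :=
  ∀ f : H → H → ZMod p, IsCocycle2 f →
    (IsCoboundary2 (res2 (charKer χ hχ) f) ↔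
      ∃ lam : H → ZMod p, IsChar p lam ∧ Cohomologous f (cup χ lam))

end MasseyGalois

/-! Corestriction is computed on cochains through the coset representatives `q.out`:
`Cor f (σ, τ) = ∑_r f (u_r σ, u_{σ⁻¹ r} τ)`, which agrees with Mathlib's transfer on `H¹`. On
cocycles `Cor ∘ Res` is multiplication by `(G:U)` and `Cor (Res χ ∪ ψ) ∼ χ ∪ Cor ψ`, giving the
first claim. As `(G:U)` is invertible mod `p`, `α ∼ χ₁ ∪ η₁ + χ₃ ∪ η₃` for characters `η₁, η₃`;
shifting the defining system of `α` by them yields a representative cohomologous to `0`. -/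

namespace MasseyGalois

section Cochains

variable {p : ℕ} {G : Type}

theorem cup_smul_right (χ η : G → ZMod p) (c : ZMod p) : cup χ (c • η) = c • cup χ η := by
  funext σ τ
  simp only [cup, Pi.smul_apply, smul_eq_mul]
  ring

variable [Group G]

theorem isChar_iff_d1_eq_zero {χ : G → ZMod p} : IsChar p χ ↔ d1 χ = 0 := by
  simp only [IsChar, funext_iff, d1, Pi.zero_apply, sub_eq_zero, eq_comm]

theorem IsChar.smul {χ : G → ZMod p} (h : IsChar p χ) (c : ZMod p) : IsChar p (c • χ) :=
  fun σ τ => by simp only [Pi.smul_apply, smul_eq_mul, h σ τ, mul_add]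

theorem IsChar.neg {χ : G → ZMod p} (h : IsChar p χ) : IsChar p (-χ) :=
  fun σ τ => by simp only [Pi.neg_apply, h σ τ, neg_add]

theorem d1_add (φ ψ : G → ZMod p) : d1 (φ + ψ) = d1 φ + d1 ψ := by
  funext σ τ
  simp only [d1, Pi.add_apply]
  ring

theorem d1_neg (φ : G → ZMod p) : d1 (-φ) = -d1 φ := by
  funext σ τ
  simp only [d1, Pi.neg_apply]
  ring

theorem d1_smul (c : ZMod p) (φ : G → ZMod p) : d1 (c • φ) = c • d1 φ := by
  funext σ τ
  simp only [d1, Pi.smul_apply, smul_eq_mul]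
  ring

namespace Cohomologous

variable {f g h f' g' : G → G → ZMod p}

theorem refl (f : G → G → ZMod p) : Cohomologous f f :=
  ⟨0, by funext σ τ; simp [d1]⟩

theorem symm (hfg : Cohomologous f g) : Cohomologous g f := by
  obtain ⟨φ, hφ⟩ := hfg
  exact ⟨-φ, by rw [d1_neg, ← hφ, neg_sub]⟩

theorem trans (hfg : Cohomologous f g) (hgh : Cohomologous g h) : Cohomologous f h := by
  obtain ⟨φ, hφ⟩ := hfg
  obtain ⟨ψ, hψ⟩ := hgh
  exact ⟨φ + ψ, by rw [d1_add, ← hφ, ← hψ, sub_add_sub_cancel]⟩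

theorem add (hfg : Cohomologous f g) (hfg' : Cohomologous f' g') :
    Cohomologous (f + f') (g + g') := by
  obtain ⟨φ, hφ⟩ := hfg
  obtain ⟨ψ, hψ⟩ := hfg'
  exact ⟨φ + ψ, by rw [d1_add, ← hφ, ← hψ, add_sub_add_comm]⟩

theorem smul (hfg : Cohomologous f g) (c : ZMod p) : Cohomologous (c • f) (c • g) := by
  obtain ⟨φ, hφ⟩ := hfg
  exact ⟨c • φ, by rw [d1_smul, ← hφ, smul_sub]⟩

end Cohomologous

instance : Trans (Cohomologous (p := p) (G := G)) Cohomologous Cohomologous :=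
  ⟨Cohomologous.trans⟩

theorem cohomologous_cup_comm {χ η : G → ZMod p} (hχ : IsChar p χ) (hη : IsChar p η) :
    Cohomologous (cup χ η) (cup (-η) χ) := by
  refine ⟨-(χ * η), funext₂ fun σ τ => ?_⟩
  simp only [d1, cup, Pi.sub_apply, Pi.neg_apply, Pi.mul_apply, hχ σ τ, hη σ τ]
  ring

theorem IsCocycle2.of_cohomologous {f g : G → G → ZMod p} (hg : IsCocycle2 g)
    (hfg : Cohomologous f g) : IsCocycle2 f := by
  obtain ⟨φ, hφ⟩ := hfg
  have hf : ∀ σ τ, f σ τ = g σ τ + (φ σ + φ τ - φ (σ * τ)) := fun σ τ => by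
    simpa [d1, sub_eq_iff_eq_add'] using congrFun₂ hφ σ τ
  intro σ τ ρ
  have hgστρ := hg σ τ ρ
  simp only [d2, hf, mul_assoc] at hgστρ ⊢
  linear_combination hgστρ

theorem IsCocycle2.apply_inv_mul_mul {f : G → G → ZMod p} (hf : IsCocycle2 f) (a b c σ τ : G) :
    f (a⁻¹ * σ * b) (b⁻¹ * τ * c) = f σ τ + ((f a⁻¹ (σ * τ) - f (a⁻¹ * (σ * τ) * c) c⁻¹)
      - (f a⁻¹ σ - f (a⁻¹ * σ * b) b⁻¹) - (f b⁻¹ τ - f (b⁻¹ * τ * c) c⁻¹)) := by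
  have h₁ := hf (a⁻¹ * σ * b) b⁻¹ τ
  have h₂ := hf a⁻¹ σ τ
  have h₃ := hf (a⁻¹ * σ * b) (b⁻¹ * τ * c) c⁻¹
  simp only [d2] at h₁ h₂ h₃
  rw [show a⁻¹ * σ * b * b⁻¹ = a⁻¹ * σ by group] at h₁
  rw [show a⁻¹ * σ * b * (b⁻¹ * τ * c) = a⁻¹ * (σ * τ) * c by group,
    show b⁻¹ * τ * c * c⁻¹ = b⁻¹ * τ by group] at h₃
  linear_combination h₁ - h₂ - h₃

theorem MasseyRep.isCocycle2 {χ₁ χ₂ χ₃ : G → ZMod p} {z : G → G → ZMod p}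
    (h₁ : IsChar p χ₁) (h₃ : IsChar p χ₃) (hz : MasseyRep χ₁ χ₂ χ₃ z) : IsCocycle2 z := by
  obtain ⟨φ₁₂, φ₂₃, hd₁₂, hd₂₃, rfl⟩ := hz
  intro σ τ ρ
  have e₁₂ := congrFun₂ hd₁₂ σ τ
  have e₂₃ := congrFun₂ hd₂₃ τ ρ
  simp only [d1, cup] at e₁₂ e₂₃
  simp only [d2, cup, Pi.add_apply, h₁ σ τ, h₃ τ ρ]
  linear_combination χ₃ ρ * e₁₂ - χ₁ σ * e₂₃

theorem isCocycle2_of_mem_masseySet {χ₁ χ₂ χ₃ : G → ZMod p} {α : G → G → ZMod p}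
    (h₁ : IsChar p χ₁) (h₃ : IsChar p χ₃) (hα : α ∈ MasseySet χ₁ χ₂ χ₃) : IsCocycle2 α := by
  obtain ⟨z, hz, hαz⟩ := hα
  exact (hz.isCocycle2 h₁ h₃).of_cohomologous hαz

theorem MasseyRep.sub_cup {χ₁ χ₂ χ₃ η₁ η₃ : G → ZMod p} {z : G → G → ZMod p}
    (hz : MasseyRep χ₁ χ₂ χ₃ z) (hη₁ : IsChar p η₁) (hη₃ : IsChar p η₃) :
    MasseyRep χ₁ χ₂ χ₃ (z - (cup χ₁ η₁ + cup η₃ χ₃)) := by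
  obtain ⟨φ₁₂, φ₂₃, hd₁₂, hd₂₃, rfl⟩ := hz
  refine ⟨φ₁₂ - η₃, φ₂₃ - η₁, ?_, ?_, ?_⟩
  · rw [sub_eq_add_neg, d1_add, d1_neg, isChar_iff_d1_eq_zero.mp hη₃, hd₁₂, neg_zero, add_zero]
  · rw [sub_eq_add_neg, d1_add, d1_neg, isChar_iff_d1_eq_zero.mp hη₁, hd₂₃, neg_zero, add_zero]
  · funext σ τ
    simp only [cup, Pi.add_apply, Pi.sub_apply]
    ring

theorem zero_mem_masseySet_of_cohomologous {χ₁ χ₂ χ₃ η₁ η₃ : G → ZMod p}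
    {α : G → G → ZMod p} (h₃ : IsChar p χ₃) (hα : α ∈ MasseySet χ₁ χ₂ χ₃)
    (hη₁ : IsChar p η₁) (hη₃ : IsChar p η₃)
    (hαη : Cohomologous α (cup χ₁ η₁ + cup χ₃ η₃)) :
    (0 : G → G → ZMod p) ∈ MasseySet χ₁ χ₂ χ₃ := by
  obtain ⟨z, hz, hαz⟩ := hα
  have hzw : Cohomologous z (cup χ₁ η₁ + cup (-η₃) χ₃) :=
    hαz.symm.trans (hαη.trans ((Cohomologous.refl _).add (cohomologous_cup_comm h₃ hη₃)))
  refine ⟨_, hz.sub_cup hη₁ hη₃.neg, ?_⟩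
  obtain ⟨φ, hφ⟩ := hzw.symm
  exact ⟨φ, by rw [zero_sub, neg_sub, hφ]⟩

end Cochains

section Corestriction

variable {p : ℕ} {G : Type} [Group G] (U : Subgroup G)

/-- With the coset representatives `q.out` as transversal, `σ * (σ⁻¹ • r).out` lies in the
coset `r`; this is its `U`-component, the factor from which the transfer is built. -/
noncomputable def cosetCocycle (r : G ⧸ U) (σ : G) : U :=
  ⟨r.out⁻¹ * σ * (σ⁻¹ • r).out, by
    rw [mul_assoc, ← QuotientGroup.eq, QuotientGroup.out_eq', ← smul_eq_mul,
      MulAction.Quotient.mk_smul_out, smul_inv_smul]⟩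

theorem coe_cosetCocycle (r : G ⧸ U) (σ : G) :
    (cosetCocycle U r σ : G) = r.out⁻¹ * σ * (σ⁻¹ • r).out := rfl

theorem cosetCocycle_mul (r : G ⧸ U) (σ τ : G) :
    cosetCocycle U r σ * cosetCocycle U (σ⁻¹ • r) τ = cosetCocycle U r (σ * τ) := by
  ext
  simp only [Subgroup.coe_mul, coe_cosetCocycle, mul_inv_rev, mul_smul]
  group

theorem IsChar.apply_cosetCocycle {χ : G → ZMod p} (hχ : IsChar p χ) (r : G ⧸ U) (σ : G) :
    χ (cosetCocycle U r σ) = χ σ + (χ r.out⁻¹ - χ (σ⁻¹ • r).out⁻¹) := by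
  have h := hχ.inv (σ⁻¹ • r).out⁻¹
  rw [inv_inv] at h
  rw [coe_cosetCocycle, hχ, hχ, h]
  ring

variable [Fintype (G ⧸ U)]

theorem sum_inv_smul_quotient {M : Type*} [AddCommMonoid M] (σ : G) (F : G ⧸ U → M) :
    ∑ r : G ⧸ U, F (σ⁻¹ • r) = ∑ r : G ⧸ U, F r :=
  Equiv.sum_comp (MulAction.toPerm σ⁻¹) F

noncomputable def corCochain1 (φ : U → ZMod p) : G → ZMod p :=
  fun σ => ∑ r : G ⧸ U, φ (cosetCocycle U r σ)

noncomputable def corCochain2 (f : U → U → ZMod p) : G → G → ZMod p :=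
  fun σ τ => ∑ r : G ⧸ U, f (cosetCocycle U r σ) (cosetCocycle U (σ⁻¹ • r) τ)

/-- `H` is a 1-cochain with values in the induced module `G ⧸ U → ℤ/p`; the left side is its
coboundary pushed forward along the `G`-equivariant map `∑ r`, hence a coboundary. -/
theorem sum_sub_sub_eq_d1 (H : G ⧸ U → G → ZMod p) (σ τ : G) :
    ∑ r : G ⧸ U, (H r (σ * τ) - H r σ - H (σ⁻¹ • r) τ) = d1 (fun g => -∑ r, H r g) σ τ := by
  rw [Finset.sum_sub_distrib, Finset.sum_sub_distrib, sum_inv_smul_quotient U σ (H · τ)]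
  simp only [d1]
  ring

theorem corCochain2_add (f g : U → U → ZMod p) :
    corCochain2 U (f + g) = corCochain2 U f + corCochain2 U g := by
  funext σ τ
  simp only [corCochain2, Pi.add_apply, Finset.sum_add_distrib]

theorem corCochain2_sub (f g : U → U → ZMod p) :
    corCochain2 U (f - g) = corCochain2 U f - corCochain2 U g := by
  funext σ τ
  simp only [corCochain2, Pi.sub_apply, Finset.sum_sub_distrib]

theorem corCochain2_d1 (φ : U → ZMod p) : corCochain2 U (d1 φ) = d1 (corCochain1 U φ) := by
  funext σ τ
  calc corCochain2 U (d1 φ) σ τ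
      = -∑ r : G ⧸ U, (φ (cosetCocycle U r (σ * τ)) - φ (cosetCocycle U r σ)
          - φ (cosetCocycle U (σ⁻¹ • r) τ)) := by
        rw [← Finset.sum_neg_distrib]
        refine Finset.sum_congr rfl fun r _ => ?_
        rw [d1, cosetCocycle_mul]
        ring
    _ = d1 (corCochain1 U φ) σ τ := by
        rw [sum_sub_sub_eq_d1 U (fun r g => φ (cosetCocycle U r g))]
        simp only [d1, corCochain1]
        ring

theorem Cohomologous.corCochain2 {f g : U → U → ZMod p} (hfg : Cohomologous f g) :
    Cohomologous (corCochain2 U f) (corCochain2 U g) := by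
  obtain ⟨φ, hφ⟩ := hfg
  exact ⟨corCochain1 U φ, by rw [← corCochain2_sub, hφ, corCochain2_d1]⟩

theorem IsChar.corCochain1 {φ : U → ZMod p} (hφ : IsChar p φ) :
    IsChar p (corCochain1 U φ) := by
  rw [isChar_iff_d1_eq_zero] at hφ ⊢
  rw [← corCochain2_d1, hφ]
  funext σ τ
  simp [corCochain2]

theorem cohomologous_corCochain2_res2 {f : G → G → ZMod p} (hf : IsCocycle2 f) :
    Cohomologous (corCochain2 U (res2 U f)) ((U.index : ZMod p) • f) := by
  let H : G ⧸ U → G → ZMod p := fun r σ =>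
    f r.out⁻¹ σ - f (cosetCocycle U r σ) (σ⁻¹ • r).out⁻¹
  refine ⟨fun g => -∑ r, H r g, funext₂ fun σ τ => ?_⟩
  rw [Pi.sub_apply, Pi.sub_apply, ← sum_sub_sub_eq_d1, Pi.smul_apply, Pi.smul_apply,
    smul_eq_mul, Subgroup.index_eq_card, Nat.card_eq_fintype_card, ← nsmul_eq_mul,
    ← Finset.card_univ, ← Finset.sum_const, corCochain2, ← Finset.sum_sub_distrib]
  refine Finset.sum_congr rfl fun r _ => ?_
  have hr : τ⁻¹ • σ⁻¹ • r = (σ * τ)⁻¹ • r := by rw [mul_inv_rev, mul_smul]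
  simp only [res2, H, coe_cosetCocycle, hf.apply_inv_mul_mul, hr]
  ring

theorem cohomologous_corCochain2_cup_res1 {χ : G → ZMod p} {ψ : U → ZMod p} (hχ : IsChar p χ)
    (hψ : IsChar p ψ) :
    Cohomologous (corCochain2 U (cup (res1 U χ) ψ)) (cup χ (corCochain1 U ψ)) := by
  let H : G ⧸ U → G → ZMod p := fun r σ => χ r.out⁻¹ * ψ (cosetCocycle U r σ)
  refine ⟨fun g => -∑ r, H r g, funext₂ fun σ τ => ?_⟩
  rw [Pi.sub_apply, Pi.sub_apply, ← sum_sub_sub_eq_d1, cup, corCochain1, Finset.mul_sum,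
    ← sum_inv_smul_quotient U σ (fun r => χ σ * ψ (cosetCocycle U r τ)), corCochain2,
    ← Finset.sum_sub_distrib]
  refine Finset.sum_congr rfl fun r _ => ?_
  simp only [cup, res1, H, hχ.apply_cosetCocycle, ← cosetCocycle_mul, hψ _ _]
  ring

theorem cor1_eq_corCochain1 {ψ : U → ZMod p} (hψ : IsChar p ψ) :
    cor1 U ψ = corCochain1 U ψ := by
  have : U.FiniteIndex := Subgroup.finiteIndex_of_finite_quotient
  let T : U.LeftTransversal :=
    ⟨Set.range Quotient.out, Subgroup.isComplement_range_left Quotient.out_eq'⟩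
  funext g
  rw [cor1, dif_pos ⟨this, hψ⟩, MonoidHom.transfer_def _ T g, Subgroup.leftTransversals.diff]
  simp only [toAdd_prod, corCochain1]
  congr 1
  · exact congrArg (@Finset.univ _) (Subsingleton.elim _ _)
  funext r
  have hT : ∀ q, (T.2.leftQuotientEquiv q : G) = q.out :=
    Subgroup.IsComplement.leftQuotientEquiv_apply Quotient.out_eq'
  refine congrArg ψ (Subtype.ext ?_)
  change (T.2.leftQuotientEquiv r : G)⁻¹ * ((g • T).2.leftQuotientEquiv r : G) = _
  rw [Subgroup.smul_apply_eq_smul_apply_inv_smul, hT, hT, coe_cosetCocycle, mul_assoc]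
  rfl

end Corestriction

end MasseyGalois

open MasseyGalois in
theorem massey_res_cor_argument_general {p : ℕ} {G : Type} [Group G]
    (U : Subgroup G) (hUfin : U.FiniteIndex) (hUp : Nat.Coprime U.index p)
    (χ₁ χ₂ χ₃ : G → ZMod p)
    (h₁ : IsChar p χ₁) (h₃ : IsChar p χ₃)
    (α : G → G → ZMod p) (hα : α ∈ MasseySet χ₁ χ₂ χ₃)
    (ψ₁ ψ₃ : ↥U → ZMod p) (hψ₁ : IsChar p ψ₁) (hψ₃ : IsChar p ψ₃)
    (hres : Cohomologous (res2 U α)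
      (cup (res1 U χ₁) ψ₁ + cup (res1 U χ₃) ψ₃)) :
    Cohomologous ((U.index : ZMod p) • α)
        (cup χ₁ (cor1 U ψ₁) + cup χ₃ (cor1 U ψ₃)) ∧
      (0 : G → G → ZMod p) ∈ MasseySet χ₁ χ₂ χ₃ := by
  let _ := U.fintypeQuotientOfFiniteIndex
  rw [cor1_eq_corCochain1 U hψ₁, cor1_eq_corCochain1 U hψ₃]
  have hcor : Cohomologous ((U.index : ZMod p) • α)
      (cup χ₁ (corCochain1 U ψ₁) + cup χ₃ (corCochain1 U ψ₃)) :=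
    calc Cohomologous ((U.index : ZMod p) • α) (corCochain2 U (res2 U α)) :=
          (cohomologous_corCochain2_res2 U (isCocycle2_of_mem_masseySet h₁ h₃ hα)).symm
      Cohomologous _ (corCochain2 U (cup (res1 U χ₁) ψ₁ + cup (res1 U χ₃) ψ₃)) :=
          hres.corCochain2 U
      _ = corCochain2 U (cup (res1 U χ₁) ψ₁) + corCochain2 U (cup (res1 U χ₃) ψ₃) :=
          corCochain2_add U _ _
      Cohomologous _ (cup χ₁ (corCochain1 U ψ₁) + cup χ₃ (corCochain1 U ψ₃)) :=
          (cohomologous_corCochain2_cup_res1 U h₁ hψ₁).add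
            (cohomologous_corCochain2_cup_res1 U h₃ hψ₃)
  refine ⟨hcor, ?_⟩
  -- `(G:U)` is invertible mod `p`, so `α` itself is cohomologous to some `χ₁ ∪ η₁ + χ₃ ∪ η₃`.
  obtain ⟨c, hc⟩ : ∃ c : ZMod p, c * U.index = 1 :=
    ⟨_, by rw [mul_comm]; exact ZMod.coe_mul_inv_eq_one _ hUp⟩
  have hα' := hcor.smul c
  rw [smul_smul, hc, one_smul, smul_add, ← cup_smul_right, ← cup_smul_right] at hα'
  exact zero_mem_masseySet_of_cohomologous h₃ hα ((hψ₁.corCochain1 U).smul c)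
    ((hψ₃.corCochain1 U).smul c) hα'

open MasseyGalois in
/-- The restriction-corestriction argument: if `U` has index prime to `p`,
`α ∈ ⟨χ₁,χ₂,χ₃⟩`, and `Res_U α = Res_U(χ₁) ∪ ψ₁ + Res_U(χ₃) ∪ ψ₃`, then
`(G:U)·α = χ₁ ∪ Cor_G ψ₁ + χ₃ ∪ Cor_G ψ₃` and `0 ∈ ⟨χ₁,χ₂,χ₃⟩`. -/
theorem massey_res_cor_argument {p : ℕ} (hp : p.Prime) {G : Type} [Group G]
    (U : Subgroup G) (hUfin : U.FiniteIndex) (hUp : Nat.Coprime U.index p)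
    (χ₁ χ₂ χ₃ : G → ZMod p)
    (h₁ : IsChar p χ₁) (h₂ : IsChar p χ₂) (h₃ : IsChar p χ₃)
    (α : G → G → ZMod p) (hα : α ∈ MasseySet χ₁ χ₂ χ₃)
    (ψ₁ ψ₃ : ↥U → ZMod p) (hψ₁ : IsChar p ψ₁) (hψ₃ : IsChar p ψ₃)
    (hres : Cohomologous (res2 U α)
      (cup (res1 U χ₁) ψ₁ + cup (res1 U χ₃) ψ₃)) :
    Cohomologous ((U.index : ZMod p) • α)
        (cup χ₁ (cor1 U ψ₁) + cup χ₃ (cor1 U ψ₃)) ∧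
      (0 : G → G → ZMod p) ∈ MasseySet χ₁ χ₂ χ₃ :=
  massey_res_cor_argument_general U hUfin hUp χ₁ χ₂ χ₃ h₁ h₃ α hα ψ₁ ψ₃ hψ₁ hψ₃ hres
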